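/- arXiv:2111.07719 — 2 statements merged into one kernel-verified Lean document; each statement's English description precedes it below -/
import Mathlib

section
/- Let ρ : [0,1] → ℝ be continuous and positive, λ_{n-1} < λ_n real, and u_{n-1}, u_n nontrivial solutions of -y'' = λ_{n-1} ρ y and -y'' = λ_n ρ y on [0,1] with u_n(0) = u_{n-1}(0) = 0, u_n'(0) > 0, u_{n-1}'(0) > 0. If u_{n-1} > 0 and u_n > 0 on an interval (0,c) ⊂ (0,1), then the ratio x ↦ u_n(x)/u_{n-1}(x) is strictly decreasing on (0,c). -/
/-!
The Wronskian `W = uₙ' uₙ₋₁ - uₙ uₙ₋₁'` vanishes at `0` and has derivative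
`W' = (λₙ₋₁ - λₙ) ρ uₙ uₙ₋₁`, which is negative where both solutions are positive. Hence `W < 0`
on `(0,c)`, and `W / uₙ₋₁²` is the derivative of `uₙ / uₙ₋₁`.
-/

open Set

theorem hasDerivAt_wronskian {u u' u'' v v' v'' : ℝ → ℝ} {x : ℝ}
    (hu : HasDerivAt u (u' x) x) (hu' : HasDerivAt u' (u'' x) x)
    (hv : HasDerivAt v (v' x) x) (hv' : HasDerivAt v' (v'' x) x) :
    HasDerivAt (fun y => u' y * v y - u y * v' y) (u'' x * v x - u x * v'' x) x :=
  ((hu'.mul hv).sub (hu.mul hv')).congr_deriv (by ring)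

theorem neg_of_hasDerivAt_neg_of_eq_zero {f f' : ℝ → ℝ} {a b x : ℝ}
    (hf : ∀ y ∈ Ico a b, HasDerivAt f (f' y) y) (hf' : ∀ y ∈ Ioo a b, f' y < 0)
    (ha : f a = 0) (hx : x ∈ Ioo a b) : f x < 0 := by
  have hanti : StrictAntiOn f (Ico a b) :=
    strictAntiOn_of_hasDerivWithinAt_neg (convex_Ico a b)
      (fun y hy => (hf y hy).continuousAt.continuousWithinAt)
      (fun y hy => (hf y (interior_subset hy)).hasDerivWithinAt)
      (fun y hy => hf' y (by rwa [interior_Ico] at hy))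
  simpa [ha] using hanti (left_mem_Ico.2 (hx.1.trans hx.2)) (Ioo_subset_Ico_self hx) hx.1

theorem strictAntiOn_div_of_wronskian_neg {u u' v v' : ℝ → ℝ} {s : Set ℝ}
    (hs : Convex ℝ s) (hso : IsOpen s)
    (hu : ∀ x ∈ s, HasDerivAt u (u' x) x) (hv : ∀ x ∈ s, HasDerivAt v (v' x) x)
    (hv0 : ∀ x ∈ s, v x ≠ 0) (hW : ∀ x ∈ s, u' x * v x - u x * v' x < 0) :
    StrictAntiOn (fun x => u x / v x) s := by
  have hdiv : ∀ x ∈ s, HasDerivAt (fun x => u x / v x) ((u' x * v x - u x * v' x) / v x ^ 2) x :=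
    fun x hx => (hu x hx).div (hv x hx) (hv0 x hx)
  refine strictAntiOn_of_hasDerivWithinAt_neg
    (f' := fun x => (u' x * v x - u x * v' x) / v x ^ 2) hs
    (fun x hx => (hdiv x hx).continuousAt.continuousWithinAt) ?_ ?_ <;> rw [hso.interior_eq]
  · exact fun x hx => (hdiv x hx).hasDerivWithinAt
  · exact fun x hx => div_neg_of_neg_of_pos (hW x hx) (sq_pos_of_ne_zero (hv0 x hx))

theorem stmt_2_general (ρ um um' um'' un un' un'' : ℝ → ℝ) (lm ln c : ℝ)
    (hρpos : ∀ x ∈ Icc (0:ℝ) 1, 0 < ρ x)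
    (hlml : lm < ln)
    (hum : ∀ x ∈ Icc (0:ℝ) 1, HasDerivAt um (um' x) x)
    (hum' : ∀ x ∈ Icc (0:ℝ) 1, HasDerivAt um' (um'' x) x)
    (hodem : ∀ x ∈ Icc (0:ℝ) 1, um'' x = -(lm * ρ x * um x))
    (hun : ∀ x ∈ Icc (0:ℝ) 1, HasDerivAt un (un' x) x)
    (hun' : ∀ x ∈ Icc (0:ℝ) 1, HasDerivAt un' (un'' x) x)
    (hoden : ∀ x ∈ Icc (0:ℝ) 1, un'' x = -(ln * ρ x * un x))
    (hum0 : um 0 = 0) (hun0 : un 0 = 0)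
    (hc : Ioo (0:ℝ) c ⊆ Ioo (0:ℝ) 1)
    (humpos : ∀ x ∈ Ioo (0:ℝ) c, 0 < um x)
    (hunpos : ∀ x ∈ Ioo (0:ℝ) c, 0 < un x) :
    StrictAntiOn (fun x => un x / um x) (Ioo (0:ℝ) c) := by
  have hIco : Ico (0:ℝ) c ⊆ Icc 0 1 := by
    rintro x ⟨hx0, hxc⟩
    rcases hx0.eq_or_lt with rfl | hx0
    · exact left_mem_Icc.2 zero_le_one
    · exact Ioo_subset_Icc_self (hc ⟨hx0, hxc⟩)
  have hW' : ∀ x ∈ Ico (0:ℝ) c, HasDerivAt (fun y => un' y * um y - un y * um' y)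
      ((lm - ln) * ρ x * un x * um x) x := fun x hx => by
    have hx1 := hIco hx
    convert hasDerivAt_wronskian (hun x hx1) (hun' x hx1) (hum x hx1) (hum' x hx1) using 1
    rw [hodem x hx1, hoden x hx1]
    ring
  have hW'neg : ∀ x ∈ Ioo (0:ℝ) c, (lm - ln) * ρ x * un x * um x < 0 := fun x hx =>
    mul_neg_of_neg_of_pos (mul_neg_of_neg_of_pos (mul_neg_of_neg_of_pos (sub_neg.2 hlml)
      (hρpos x (hIco (Ioo_subset_Ico_self hx)))) (hunpos x hx)) (humpos x hx)
  have hWneg : ∀ x ∈ Ioo (0:ℝ) c, un' x * um x - un x * um' x < 0 := fun x hx =>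
    neg_of_hasDerivAt_neg_of_eq_zero (f := fun y => un' y * um y - un y * um' y) hW' hW'neg
      (by simp [hum0, hun0]) hx
  have hIoo : Ioo (0:ℝ) c ⊆ Icc 0 1 := Ioo_subset_Ico_self.trans hIco
  exact strictAntiOn_div_of_wronskian_neg (convex_Ioo 0 c) isOpen_Ioo
    (fun x hx => hun x (hIoo hx)) (fun x hx => hum x (hIoo hx)) (fun x hx => (humpos x hx).ne')
    hWneg

/-- If `uₙ₋₁, uₙ` are nontrivial solutions of the string equation for `λₙ₋₁ < λₙ`,
vanishing at `0` with positive initial slope, and both positive on `(0,c)`,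
then `uₙ/uₙ₋₁` is strictly decreasing on `(0,c)`. -/
theorem stmt_2 (ρ um um' um'' un un' un'' : ℝ → ℝ) (lm ln c : ℝ)
    (hρc : ContinuousOn ρ (Icc (0:ℝ) 1))
    (hρpos : ∀ x ∈ Icc (0:ℝ) 1, 0 < ρ x)
    (hlml : lm < ln)
    (hum : ∀ x ∈ Icc (0:ℝ) 1, HasDerivAt um (um' x) x)
    (hum' : ∀ x ∈ Icc (0:ℝ) 1, HasDerivAt um' (um'' x) x)
    (hodem : ∀ x ∈ Icc (0:ℝ) 1, um'' x = -(lm * ρ x * um x))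
    (hun : ∀ x ∈ Icc (0:ℝ) 1, HasDerivAt un (un' x) x)
    (hun' : ∀ x ∈ Icc (0:ℝ) 1, HasDerivAt un' (un'' x) x)
    (hoden : ∀ x ∈ Icc (0:ℝ) 1, un'' x = -(ln * ρ x * un x))
    (humnt : ∃ x ∈ Icc (0:ℝ) 1, um x ≠ 0)
    (hunnt : ∃ x ∈ Icc (0:ℝ) 1, un x ≠ 0)
    (hum0 : um 0 = 0) (hun0 : un 0 = 0)
    (hum'0 : 0 < um' 0) (hun'0 : 0 < un' 0)
    (hc : Ioo (0:ℝ) c ⊆ Ioo (0:ℝ) 1)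
    (humpos : ∀ x ∈ Ioo (0:ℝ) c, 0 < um x)
    (hunpos : ∀ x ∈ Ioo (0:ℝ) c, 0 < un x) :
    StrictAntiOn (fun x => un x / um x) (Ioo (0:ℝ) c) :=
  stmt_2_general ρ um um' um'' un un' un'' lm ln c hρpos hlml hum hum' hodem hun hun' hoden hum0
    hun0 hc humpos hunpos
end

section
/- Let z_i < z_{i+1}, and let f : [z_i, z_{i+1}] → ℝ be continuous, not identically zero, with f < 0 on (z_i, x₁) ∪ (x₂, z_{i+1}) and f > 0 on (x₁, x₂) for some z_i < x₁ < x₂ < z_{i+1}. Suppose there exist constants α, β ∈ ℝ such that ∫ f dx = α ∫ x f dx and ∫ x² f dx = β ∫ x f dx (integrals over [z_i, z_{i+1}]). Then ∫_{z_i}^{z_{i+1}} x f(x) dx ≠ 0. -/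
/-! The quadratic `-(x - x₁)(x - x₂)` has the same sign pattern `(-, +, -)` as `f`, so its moment
`∫ -(x - x₁)(x - x₂) f x dx` is strictly positive. On the other hand this moment is a linear
combination of the zeroth, first and second moments of `f`, and by the proportionality
hypotheses all three vanish as soon as the first one does. -/

open Set MeasureTheory intervalIntegral

theorem intervalIntegral_pos_of_nonneg_of_pos_on_Ioo {g : ℝ → ℝ} {a b c d : ℝ}
    (hac : a ≤ c) (hcd : c < d) (hdb : d ≤ b) (hg : IntervalIntegrable g volume a b)
    (hnonneg : ∀ x ∈ Ioo a b, 0 ≤ g x) (hpos : ∀ x ∈ Ioo c d, 0 < g x) :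
    0 < ∫ x in a..b, g x := by
  have hg_cd : IntervalIntegrable g volume c d :=
    hg.mono_set (uIcc_subset_uIcc (mem_uIcc_of_le hac (hcd.le.trans hdb))
      (mem_uIcc_of_le (hac.trans hcd.le) hdb))
  have hae : 0 ≤ᵐ[volume.restrict (Ioc a b)] g :=
    (ae_restrict_congr_set Ioo_ae_eq_Ioc).1 (ae_restrict_of_forall_mem measurableSet_Ioo hnonneg)
  calc 0 < ∫ x in c..d, g x := intervalIntegral_pos_of_pos_on hg_cd hpos hcd
    _ ≤ ∫ x in a..b, g x := integral_mono_interval hac hcd.le hdb hae hg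

theorem integral_quadratic_mul {f : ℝ → ℝ} {a b : ℝ} (hf : IntervalIntegrable f volume a b)
    (A B C : ℝ) :
    ∫ x in a..b, (A * x ^ 2 + B * x + C) * f x =
      A * (∫ x in a..b, x ^ 2 * f x) + B * (∫ x in a..b, x * f x) + C * ∫ x in a..b, f x := by
  have h2 : IntervalIntegrable (fun x => x ^ 2 * f x) volume a b :=
    hf.continuousOn_mul (continuous_pow 2).continuousOn
  have h1 : IntervalIntegrable (fun x => x * f x) volume a b :=
    hf.continuousOn_mul continuous_id.continuousOn
  simp only [add_mul, mul_assoc]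
  rw [integral_add ((h2.const_mul A).add (h1.const_mul B)) (hf.const_mul C),
    integral_add (h2.const_mul A) (h1.const_mul B),
    intervalIntegral.integral_const_mul, intervalIntegral.integral_const_mul,
    intervalIntegral.integral_const_mul]

theorem integral_quadratic_mul_eq_zero {f : ℝ → ℝ} {a b α β : ℝ}
    (hf : IntervalIntegrable f volume a b)
    (hα : ∫ x in a..b, f x = α * ∫ x in a..b, x * f x)
    (hβ : ∫ x in a..b, x ^ 2 * f x = β * ∫ x in a..b, x * f x)
    (h0 : ∫ x in a..b, x * f x = 0) (A B C : ℝ) :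
    ∫ x in a..b, (A * x ^ 2 + B * x + C) * f x = 0 := by
  rw [integral_quadratic_mul hf, hα, hβ, h0]
  ring

theorem neg_mul_sub_mul_sub_mul_nonneg {f : ℝ → ℝ} {a b x₁ x₂ : ℝ} (h₁₂ : x₁ < x₂)
    (hneg : ∀ x ∈ Ioo a x₁ ∪ Ioo x₂ b, f x < 0) (hpos : ∀ x ∈ Ioo x₁ x₂, 0 < f x)
    {x : ℝ} (hx : x ∈ Ioo a b) :
    0 ≤ -((x - x₁) * (x - x₂)) * f x := by
  rcases lt_trichotomy x x₁ with h | rfl | h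
  · have hf := hneg x (Or.inl ⟨hx.1, h⟩)
    exact mul_nonneg_of_nonpos_of_nonpos (by nlinarith) hf.le
  · simp
  rcases lt_trichotomy x x₂ with h' | rfl | h'
  · exact mul_nonneg (by nlinarith) (hpos x ⟨h, h'⟩).le
  · simp
  · have hf := hneg x (Or.inr ⟨h', hx.2⟩)
    exact mul_nonneg_of_nonpos_of_nonpos (by nlinarith) hf.le

theorem stmt_7_general (zi x1 x2 zi1 : ℝ) (f : ℝ → ℝ) (α β : ℝ)
    (h1 : zi < x1) (h2 : x1 < x2) (h3 : x2 < zi1)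
    (hfc : ContinuousOn f (Icc zi zi1))
    (hneg : ∀ x ∈ Ioo zi x1 ∪ Ioo x2 zi1, f x < 0)
    (hpos : ∀ x ∈ Ioo x1 x2, 0 < f x)
    (hα : ∫ x in zi..zi1, f x = α * ∫ x in zi..zi1, x * f x)
    (hβ : ∫ x in zi..zi1, x ^ 2 * f x = β * ∫ x in zi..zi1, x * f x) :
    (∫ x in zi..zi1, x * f x) ≠ 0 := by
  intro h0
  have hf : IntervalIntegrable f volume zi zi1 := hfc.intervalIntegrable_of_Icc (by linarith)
  have hquad : ∀ x : ℝ, -((x - x1) * (x - x2)) = -1 * x ^ 2 + (x1 + x2) * x + -(x1 * x2) := by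
    intro x; ring
  have hzero := integral_quadratic_mul_eq_zero hf hα hβ h0 (-1) (x1 + x2) (-(x1 * x2))
  have hpositive : 0 < ∫ x in zi..zi1, -((x - x1) * (x - x2)) * f x :=
    intervalIntegral_pos_of_nonneg_of_pos_on_Ioo h1.le h2 h3.le
      (hf.continuousOn_mul (by fun_prop))
      (fun x hx => neg_mul_sub_mul_sub_mul_nonneg h2 hneg hpos hx)
      (fun x hx => mul_pos (by nlinarith [hx.1, hx.2]) (hpos x hx))
  simp only [hquad] at hpositive
  linarith

/-- If the zeroth and second moments of `f` are proportional to the first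
moment, and `f` has the sign pattern `(-,+,-)` with sign changes at `x₁ < x₂`,
then the first moment `∫ x f(x) dx` is nonzero. -/
theorem stmt_7 (zi x1 x2 zi1 : ℝ) (f : ℝ → ℝ) (α β : ℝ)
    (h1 : zi < x1) (h2 : x1 < x2) (h3 : x2 < zi1)
    (hfc : ContinuousOn f (Icc zi zi1))
    (hnz : ∃ x ∈ Icc zi zi1, f x ≠ 0)
    (hneg : ∀ x ∈ Ioo zi x1 ∪ Ioo x2 zi1, f x < 0)
    (hpos : ∀ x ∈ Ioo x1 x2, 0 < f x)
    (hα : ∫ x in zi..zi1, f x = α * ∫ x in zi..zi1, x * f x)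
    (hβ : ∫ x in zi..zi1, x ^ 2 * f x = β * ∫ x in zi..zi1, x * f x) :
    (∫ x in zi..zi1, x * f x) ≠ 0 :=
  stmt_7_general zi x1 x2 zi1 f α β h1 h2 h3 hfc hneg hpos hα hβ
end
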